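/- Let G₂(t) = -1/24 + ∑_{d≥1} σ(d) t^d ∈ ℚ[[t]] where σ(d) is the sum of divisors of d. Define F(t) = 32·G₂(t²)² - 40·G₂(t²)·G₂(t) + 8·G₂(t)² - t·G₂'(t). Then F(t) = 4·t²·G₂'(t²), where G₂'(t²) denotes the formal derivative of G₂ evaluated at t² (i.e., the composition of G₂' with t ↦ t²). -/

import Mathlib

open PowerSeries

/-- The Eisenstein series of weight 2 as a formal power series over ℚ. -/
noncomputable def G2 : ℚ⟦X⟧ :=
  PowerSeries.mk fun d => if d = 0 then -1/24 else (∑ k ∈ Nat.divisors d, (k : ℚ))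

/-- Substitution of t² into a formal power series over ℚ. -/
noncomputable def subSq (f : ℚ⟦X⟧) : ℚ⟦X⟧ :=
  PowerSeries.mk fun n => if 2 ∣ n then PowerSeries.coeff (n / 2) f else 0

/-- The formal power series ∏_{l ≥ 1} (1 - t^l)^{-24}, defined coefficientwise
(the n-th coefficient only depends on the factors with l ≤ n). -/
noncomputable def Q24 : ℚ⟦X⟧ :=
  PowerSeries.mk fun n =>
    PowerSeries.coeff n (∏ l ∈ Finset.Icc 1 n, ((1 - (PowerSeries.X : ℚ⟦X⟧) ^ l) ^ 24)⁻¹)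

/-!
Write `L = ∑ σ(n) tⁿ`, so that `G₂ = L - 1/24`, and `L⁻ = ∑ (∑_{d ∣ n} (-1)ᵈ d) tⁿ = 4 L(t²) - L`;
similarly `L₃` and `L₃⁻` with `d³`. Liouville's elementary method compares, for an even `f`, the
sums of `f (a - b)` and `f (a + b)` over all `a x + b y = n` with `a, b, x, y ≥ 1`; the bijection
`(a, b, x, y) ↦ (a - b, b, x, x + y)` between `{b < a}` and `{x < y}` reduces the difference to
the boundary terms `a = b` and `x = y`, which are divisor sums of `n`. For `f(u) = u²` and
`f(u) = (-1)ᵘ u²` the two sums collapse to `-4 ∑ a b` and `-4 ∑ (-1)ᵃ a (-1)ᵇ b`, the coefficients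
of `L²` and `(L⁻)²`, giving `12 L² = 5 L₃ + L - 6 θL` and `4 (L⁻)² = L₃⁻ + L⁻ - 2 θL⁻` with
`θ = t d/dt`. The theorem is a linear combination of these two identities and the first one at `t²`.
-/

open Finset

def reps (n : ℕ) : Finset (ℕ × ℕ × ℕ × ℕ) :=
  (Icc 1 n ×ˢ Icc 1 n ×ˢ Icc 1 n ×ˢ Icc 1 n).filter fun q => q.1 * q.2.2.1 + q.2.1 * q.2.2.2 = n

def repSum {M : Type*} [AddCommMonoid M] (n : ℕ) (W : ℕ → ℕ → ℕ → ℕ → M) : M :=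
  ∑ q ∈ reps n, W q.1 q.2.1 q.2.2.1 q.2.2.2

theorem mem_reps {n a b x y : ℕ} :
    (a, b, x, y) ∈ reps n ↔ 0 < a ∧ 0 < b ∧ 0 < x ∧ 0 < y ∧ a * x + b * y = n := by
  simp only [reps, mem_filter, mem_product, mem_Icc]
  constructor
  · rintro ⟨⟨⟨ha, -⟩, ⟨hb, -⟩, ⟨hx, -⟩, ⟨hy, -⟩⟩, h⟩
    exact ⟨ha, hb, hx, hy, h⟩
  · rintro ⟨ha, hb, hx, hy, rfl⟩
    refine ⟨⟨⟨ha, ?_⟩, ⟨hb, ?_⟩, ⟨hx, ?_⟩, ⟨hy, ?_⟩⟩, rfl⟩ <;> nlinarith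

section repSum

variable {M : Type*} [AddCommMonoid M] (n : ℕ)

theorem repSum_add (V W : ℕ → ℕ → ℕ → ℕ → M) :
    repSum n (fun a b x y => V a b x y + W a b x y) = repSum n V + repSum n W :=
  sum_add_distrib

theorem repSum_congr {V W : ℕ → ℕ → ℕ → ℕ → M} (h : ∀ a b x y, V a b x y = W a b x y) :
    repSum n V = repSum n W :=
  sum_congr rfl fun _ _ => h _ _ _ _

theorem repSum_ite_trichotomy (u v : ℕ → ℕ → ℕ → ℕ → ℕ) (W : ℕ → ℕ → ℕ → ℕ → M) :
    repSum n W = repSum n (fun a b x y => if u a b x y < v a b x y then W a b x y else 0)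
      + repSum n (fun a b x y => if v a b x y < u a b x y then W a b x y else 0)
      + repSum n (fun a b x y => if u a b x y = v a b x y then W a b x y else 0) := by
  rw [← repSum_add, ← repSum_add]
  refine repSum_congr n fun a b x y => ?_
  rcases lt_trichotomy (u a b x y) (v a b x y) with h | h | h
  · simp [h, h.ne, h.not_gt]
  · simp [h]
  · simp [h, h.ne', h.not_gt]

theorem repSum_swap (W : ℕ → ℕ → ℕ → ℕ → M) :
    repSum n (fun a b x y => W b a y x) = repSum n W := by
  refine sum_nbij' (fun q => (q.2.1, q.1, q.2.2.2, q.2.2.1))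
    (fun q => (q.2.1, q.1, q.2.2.2, q.2.2.1)) ?_ ?_ (fun _ _ => rfl) (fun _ _ => rfl)
    (fun _ _ => rfl) <;>
  · rintro ⟨a, b, x, y⟩ h
    simp only [mem_reps] at h ⊢
    obtain ⟨ha, hb, hx, hy, rfl⟩ := h
    exact ⟨hb, ha, hy, hx, by ring⟩

theorem repSum_transpose (W : ℕ → ℕ → ℕ → ℕ → M) :
    repSum n (fun a b x y => W x y a b) = repSum n W := by
  refine sum_nbij' (fun q => (q.2.2.1, q.2.2.2, q.1, q.2.1))
    (fun q => (q.2.2.1, q.2.2.2, q.1, q.2.1)) ?_ ?_ (fun _ _ => rfl) (fun _ _ => rfl)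
    (fun _ _ => rfl) <;>
  · rintro ⟨a, b, x, y⟩ h
    simp only [mem_reps] at h ⊢
    obtain ⟨ha, hb, hx, hy, rfl⟩ := h
    exact ⟨hx, hy, ha, hb, by ring⟩

theorem repSum_shift (W : ℕ → ℕ → ℕ → ℕ → M) :
    repSum n (fun a b x y => if b < a then W (a - b) b x (x + y) else 0)
      = repSum n (fun a b x y => if x < y then W a b x y else 0) := by
  simp only [repSum, ← sum_filter]
  refine sum_nbij' (fun q => (q.1 - q.2.1, q.2.1, q.2.2.1, q.2.2.1 + q.2.2.2))
    (fun q => (q.1 + q.2.1, q.2.1, q.2.2.1, q.2.2.2 - q.2.2.1)) ?_ ?_ ?_ ?_ (fun _ _ => rfl)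
  · rintro ⟨a, b, x, y⟩ h
    simp only [mem_filter, mem_reps] at h ⊢
    obtain ⟨⟨ha, hb, hx, hy, rfl⟩, hba⟩ := h
    refine ⟨⟨by omega, hb, hx, by omega, ?_⟩, by omega⟩
    zify [hba.le]
    ring
  · rintro ⟨a, b, x, y⟩ h
    simp only [mem_filter, mem_reps] at h ⊢
    obtain ⟨⟨ha, hb, hx, hy, rfl⟩, hxy⟩ := h
    refine ⟨⟨by omega, hb, hx, by omega, ?_⟩, by omega⟩
    zify [hxy.le]
    ring
  · rintro ⟨a, b, x, y⟩ h
    simp only [mem_filter, mem_reps] at h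
    simp only [Prod.mk.injEq, true_and]
    omega
  · rintro ⟨a, b, x, y⟩ h
    simp only [mem_filter, mem_reps] at h
    simp only [Prod.mk.injEq, true_and]
    omega

theorem repSum_diagonal (W : ℕ → ℕ → ℕ → M) :
    repSum n (fun a b x y => if x = y then W a b x else 0)
      = ∑ p ∈ n.divisorsAntidiagonal, ∑ a ∈ Ico 1 p.1, W a (p.1 - a) p.2 := by
  rw [repSum, ← sum_filter, sum_sigma']
  refine sum_nbij' (fun q => ⟨(q.1 + q.2.1, q.2.2.1), q.1⟩)
    (fun s => (s.2, s.1.1 - s.2, s.1.2, s.1.2)) ?_ ?_ ?_ ?_ ?_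
  · rintro ⟨a, b, x, y⟩ h
    simp only [mem_filter, mem_reps, mem_sigma, Nat.mem_divisorsAntidiagonal,
      mem_Ico] at h ⊢
    obtain ⟨⟨ha, hb, hx, hy, rfl⟩, rfl⟩ := h
    refine ⟨⟨by ring, by positivity⟩, by omega, by omega⟩
  · rintro ⟨⟨d, e⟩, a⟩ h
    simp only [mem_filter, mem_reps, mem_sigma, Nat.mem_divisorsAntidiagonal,
      mem_Ico] at h ⊢
    obtain ⟨⟨rfl, hn⟩, ha, had⟩ := h
    have he : 0 < e := Nat.pos_of_ne_zero (right_ne_zero_of_mul hn)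
    refine ⟨⟨ha, by omega, he, he, ?_⟩, trivial⟩
    rw [← add_mul, Nat.add_sub_cancel' had.le]
  · rintro ⟨a, b, x, y⟩ h
    simp only [mem_filter, mem_reps] at h
    obtain ⟨-, rfl⟩ := h
    simp
  · rintro ⟨⟨d, e⟩, a⟩ h
    simp only [mem_sigma, mem_Ico] at h
    simp only [Sigma.mk.injEq, Prod.mk.injEq, heq_eq_eq, and_true]
    omega
  · rintro ⟨a, b, x, y⟩ h
    simp only [mem_filter, mem_reps] at h
    obtain ⟨-, rfl⟩ := h
    simp

end repSum

section Liouville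

variable {R : Type*} [CommRing R] (n : ℕ)

theorem repSum_diagonal_add (h : ℕ → ℕ → R) :
    repSum n (fun a b x y => if x = y then h (a + b) x else 0)
      = ∑ p ∈ n.divisorsAntidiagonal, ((p.1 : R) - 1) * h p.1 p.2 := by
  rw [repSum_diagonal]
  refine sum_congr rfl fun p hp => ?_
  have hp1 : 1 ≤ p.1 := Nat.pos_of_mem_divisors (Nat.fst_mem_divisors_of_mem_antidiagonal hp)
  rw [sum_congr rfl fun a ha => by rw [Nat.add_sub_cancel' (mem_Ico.1 ha).2.le], sum_const,
    Nat.card_Ico, nsmul_eq_mul, Nat.cast_sub hp1, Nat.cast_one]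

theorem repSum_apply_sub {f : ℤ → R} (hf : Function.Even f) :
    repSum n (fun a b _ _ => f (a - b))
      = 2 * repSum n (fun a _ x y => if x < y then f a else 0)
        + repSum n (fun a b _ _ => if a = b then f 0 else 0) := by
  have hlt : repSum n (fun a b _ _ => if b < a then f (a - b) else 0)
      = repSum n (fun a _ x y => if x < y then f a else 0) := by
    rw [← repSum_shift n fun a _ _ _ => f a]
    refine repSum_congr n fun a b _ _ => ?_
    split_ifs with h
    · rw [Nat.cast_sub h.le]
    · rfl
  have hgt : repSum n (fun a b _ _ => if a < b then f (a - b) else 0)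
      = repSum n (fun a b _ _ => if b < a then f (a - b) else 0) := by
    rw [← repSum_swap]
    refine repSum_congr n fun a b _ _ => ?_
    rw [← hf, neg_sub]
  rw [repSum_ite_trichotomy n (fun a _ _ _ => a) (fun _ b _ _ => b), hgt, hlt, two_mul]
  refine congrArg _ (repSum_congr n fun a b _ _ => ?_)
  split_ifs with h
  · rw [h, sub_self]
  · rfl

theorem repSum_apply_add (f : ℕ → R) :
    repSum n (fun a b _ _ => f (a + b))
      = 2 * repSum n (fun a b _ _ => if b < a then f a else 0)
        + repSum n (fun a b x y => if x = y then f (a + b) else 0) := by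
  have hlt : repSum n (fun a b x y => if x < y then f (a + b) else 0)
      = repSum n (fun a b _ _ => if b < a then f a else 0) := by
    rw [← repSum_shift n fun a b _ _ => f (a + b)]
    refine repSum_congr n fun a b _ _ => ?_
    split_ifs with h
    · rw [Nat.sub_add_cancel h.le]
    · rfl
  have hgt : repSum n (fun a b x y => if y < x then f (a + b) else 0)
      = repSum n (fun a b x y => if x < y then f (a + b) else 0) := by
    rw [← repSum_swap]
    exact repSum_congr n fun a b _ _ => by rw [add_comm]
  rw [repSum_ite_trichotomy n (fun _ _ x _ => x) (fun _ _ _ y => y), hgt, hlt, two_mul]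

theorem repSum_lt_sub_lt (f : ℕ → R) :
    repSum n (fun a _ x y => if x < y then f a else 0)
      - repSum n (fun a b _ _ => if b < a then f a else 0)
      = repSum n (fun a b _ _ => if a = b then f a else 0)
        - repSum n (fun a _ x y => if x = y then f a else 0) := by
  have hmirror : repSum n (fun a b _ _ => if a < b then f a else 0)
      = repSum n (fun a _ x y => if y < x then f a else 0) :=
    calc _ = repSum n (fun a b _ _ => if b < a then f b else 0) :=
          repSum_swap n fun a b _ _ => if b < a then f b else 0
      _ = repSum n (fun _ b x y => if x < y then f b else 0) := repSum_shift n fun _ b _ _ => f b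
      _ = _ := repSum_swap n fun a _ x y => if y < x then f a else 0
  have hab := repSum_ite_trichotomy n (fun a _ _ _ => a) (fun _ b _ _ => b) fun a _ _ _ => f a
  have hxy := repSum_ite_trichotomy n (fun _ _ x _ => x) (fun _ _ _ y => y) fun a _ _ _ => f a
  linear_combination hmirror - hab.symm.trans hxy

-- `a - b` is subtraction in `ℤ`, since `f` is defined on `ℤ`.
theorem repSum_liouville {f : ℤ → R} (hf : Function.Even f) :
    repSum n (fun a b _ _ => f (a - b) - f (a + b))
      = ∑ p ∈ n.divisorsAntidiagonal,
          (((p.1 : R) - 1) * (f 0 + 2 * f p.2 - f p.1) - 2 * ∑ j ∈ Ico 1 p.1, f j) := by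
  set g : ℕ → R := fun m => f m
  have hsplit : repSum n (fun a b _ _ => f (a - b) - f (a + b))
      = repSum n (fun a b _ _ => f (a - b)) - repSum n (fun a b _ _ => g (a + b)) := by
    simp only [repSum, g, sum_sub_distrib, Nat.cast_add]
  have h0 : repSum n (fun a b _ _ => if a = b then f 0 else 0)
      = ∑ p ∈ n.divisorsAntidiagonal, ((p.1 : R) - 1) * f 0 :=
    (repSum_transpose n fun _ _ x y => if x = y then f 0 else 0).trans
      (repSum_diagonal_add n fun _ _ => f 0)
  have h1 : repSum n (fun a b _ _ => if a = b then g a else 0)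
      = ∑ p ∈ n.divisorsAntidiagonal, ((p.1 : R) - 1) * g p.2 :=
    (repSum_transpose n fun _ _ x y => if x = y then g x else 0).trans
      (repSum_diagonal_add n fun _ e => g e)
  have h2 : repSum n (fun a b x y => if x = y then g (a + b) else 0)
      = ∑ p ∈ n.divisorsAntidiagonal, ((p.1 : R) - 1) * g p.1 :=
    repSum_diagonal_add n fun d _ => g d
  have h3 : repSum n (fun a _ x y => if x = y then g a else 0)
      = ∑ p ∈ n.divisorsAntidiagonal, ∑ j ∈ Ico 1 p.1, g j :=
    repSum_diagonal n fun a _ _ => g a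
  have hR : ∑ p ∈ n.divisorsAntidiagonal,
        (((p.1 : R) - 1) * (f 0 + 2 * f p.2 - f p.1) - 2 * ∑ j ∈ Ico 1 p.1, f j)
      = ∑ p ∈ n.divisorsAntidiagonal, ((p.1 : R) - 1) * f 0
        + 2 * ∑ p ∈ n.divisorsAntidiagonal, ((p.1 : R) - 1) * g p.2
        - ∑ p ∈ n.divisorsAntidiagonal, ((p.1 : R) - 1) * g p.1
        - 2 * ∑ p ∈ n.divisorsAntidiagonal, ∑ j ∈ Ico 1 p.1, g j := by
    simp only [mul_sum, ← sum_add_distrib, ← sum_sub_distrib]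
    exact sum_congr rfl fun p _ => by ring
  rw [hsplit, repSum_apply_sub n hf, repSum_apply_add, hR, ← h0, ← h1, ← h2, ← h3]
  linear_combination 2 * repSum_lt_sub_lt n g

end Liouville

theorem sum_divisorsAntidiagonal_add {M : Type*} [AddCommMonoid M] (φ ψ : ℕ → M) (n : ℕ) :
    ∑ p ∈ n.divisorsAntidiagonal, (φ p.1 + ψ p.2) = ∑ d ∈ n.divisors, (φ d + ψ d) := by
  rw [sum_add_distrib, sum_add_distrib, Nat.sum_divisorsAntidiagonal fun d _ => φ d,
    Nat.sum_divisorsAntidiagonal' fun _ e => ψ e]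

theorem sum_Ico_one_sq (d : ℕ) :
    ∑ j ∈ Ico 1 d, (j : ℚ) ^ 2 = ((d : ℚ) - 1) * d * (2 * d - 1) / 6 := by
  induction d with
  | zero => simp
  | succ d ih =>
    rcases Nat.eq_zero_or_pos d with rfl | hd
    · simp
    · rw [sum_Ico_succ_top hd, ih]
      push_cast
      ring

theorem sum_Ico_one_neg_one_pow_mul_sq (d : ℕ) :
    ∑ j ∈ Ico 1 d, (-1 : ℚ) ^ j * (j : ℚ) ^ 2 = (-1) ^ (d + 1) * ((d : ℚ) - 1) * d / 2 := by
  induction d with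
  | zero => simp
  | succ d ih =>
    rcases Nat.eq_zero_or_pos d with rfl | hd
    · simp
    · rw [sum_Ico_succ_top hd, ih]
      push_cast
      ring

theorem sum_divisors_filter_two_dvd {M : Type*} [AddCommMonoid M] (g : ℕ → M) (n : ℕ) :
    ∑ d ∈ n.divisors with 2 ∣ d, g d
      = if 2 ∣ n then ∑ e ∈ (n / 2).divisors, g (2 * e) else 0 := by
  split_ifs with hn
  · obtain ⟨m, rfl⟩ := hn
    rw [Nat.mul_div_cancel_left m two_pos]
    refine sum_nbij' (· / 2) (2 * ·) ?_ ?_ ?_ ?_ ?_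
    · intro d hd
      simp only [mem_filter, Nat.mem_divisors] at hd
      obtain ⟨⟨hdvd, hm⟩, c, rfl⟩ := hd
      simp only [Nat.mem_divisors]
      rw [Nat.mul_div_cancel_left c two_pos]
      exact ⟨Nat.dvd_of_mul_dvd_mul_left two_pos hdvd, by omega⟩
    · intro e he
      simp only [Nat.mem_divisors] at he
      simp only [mem_filter, Nat.mem_divisors]
      exact ⟨⟨mul_dvd_mul_left 2 he.1, by omega⟩, dvd_mul_right 2 e⟩
    · intro d hd
      obtain ⟨c, rfl⟩ := (mem_filter.1 hd).2
      simp
    · intro e _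
      simp
    · intro d hd
      obtain ⟨c, rfl⟩ := (mem_filter.1 hd).2
      simp
  · refine sum_eq_zero fun d hd => absurd ?_ hn
    rw [mem_filter] at hd
    exact hd.2.trans (Nat.dvd_of_mem_divisors hd.1)

theorem sum_divisors_neg_one_pow_mul {R : Type*} [CommRing R] (g : ℕ → R) (n : ℕ) :
    ∑ d ∈ n.divisors, (-1) ^ d * g d
      = 2 * (if 2 ∣ n then ∑ e ∈ (n / 2).divisors, g (2 * e) else 0) - ∑ d ∈ n.divisors, g d := by
  rw [← sum_divisors_filter_two_dvd, sum_filter, mul_sum, ← sum_sub_distrib]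
  refine sum_congr rfl fun d _ => ?_
  rcases Nat.even_or_odd d with h | h
  · rw [h.neg_one_pow, if_pos (even_iff_two_dvd.1 h)]
    ring
  · rw [h.neg_one_pow, if_neg (Nat.not_even_iff_odd.2 h ∘ even_iff_two_dvd.2)]
    ring

theorem twelve_mul_repSum_mul (n : ℕ) :
    12 * repSum n (fun a b _ _ => (a : ℚ) * b)
      = ∑ d ∈ n.divisors, (5 * (d : ℚ) ^ 3 + d - 6 * n * d) := by
  have hL := repSum_liouville n (f := fun u : ℤ => (u : ℚ) ^ 2) fun u => by simp
  push_cast at hL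
  calc 12 * repSum n (fun a b _ _ => (a : ℚ) * b)
      = -3 * repSum n (fun a b _ _ => ((a : ℚ) - b) ^ 2 - (a + b) ^ 2) := by
        simp only [repSum, mul_sum]
        exact sum_congr rfl fun _ _ => by ring
    _ = -3 * ∑ d ∈ n.divisors,
          ((2 * d ^ 2 - (5 * (d : ℚ) ^ 3 + d) / 3) + (2 * n * d - 2 * d ^ 2)) := by
        rw [hL, ← sum_divisorsAntidiagonal_add]
        refine congrArg _ (sum_congr rfl fun p hp => ?_)
        have hmul : (p.1 : ℚ) * p.2 = n := by
          exact_mod_cast (Nat.mem_divisorsAntidiagonal.1 hp).1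
        rw [sum_Ico_one_sq]
        linear_combination 2 * (p.2 : ℚ) * hmul
    _ = _ := by
        rw [mul_sum]
        exact sum_congr rfl fun d _ => by ring

theorem four_mul_repSum_neg_one_pow_mul (n : ℕ) :
    4 * repSum n (fun a b _ _ => (-1) ^ a * (a : ℚ) * ((-1) ^ b * b))
      = ∑ d ∈ n.divisors, (-1) ^ d * ((d : ℚ) ^ 3 + d - 2 * n * d) := by
  have hL := repSum_liouville n (f := fun u : ℤ => (u.negOnePow : ℚ) * (u : ℚ) ^ 2)
    fun u => by simp only [Int.negOnePow_neg, Int.cast_neg, neg_sq]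
  simp only [Int.negOnePow_sub, Int.negOnePow_add] at hL
  push_cast [Int.cast_negOnePow_natCast] at hL
  calc 4 * repSum n (fun a b _ _ => (-1) ^ a * (a : ℚ) * ((-1) ^ b * b))
      = -repSum n (fun a b _ _ =>
          (-1) ^ a * (-1) ^ b * ((a : ℚ) - b) ^ 2 - (-1) ^ a * (-1) ^ b * ((a : ℚ) + b) ^ 2) := by
        simp only [repSum, mul_sum, ← sum_neg_distrib]
        exact sum_congr rfl fun _ _ => by ring
    _ = -∑ d ∈ n.divisors, (-(-1) ^ d * ((d : ℚ) ^ 3 - 2 * d ^ 2 + d)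
          + 2 * (-1) ^ d * (n * d - d ^ 2)) := by
        rw [hL, ← sum_divisorsAntidiagonal_add]
        refine congrArg _ (sum_congr rfl fun p hp => ?_)
        have hmul : (p.1 : ℚ) * p.2 = n := by
          exact_mod_cast (Nat.mem_divisorsAntidiagonal.1 hp).1
        rw [sum_Ico_one_neg_one_pow_mul_sq]
        linear_combination 2 * (-1) ^ p.2 * (p.2 : ℚ) * hmul
    _ = _ := by
        rw [← sum_neg_distrib]
        exact sum_congr rfl fun d _ => by ring

/-- The Lambert series `∑ g d * tᵈ / (1 - tᵈ)`. -/
def lambertSeries {R : Type*} [CommSemiring R] (g : ℕ → R) : R⟦X⟧ :=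
  mk fun n => ∑ d ∈ n.divisors, g d

theorem coeff_lambertSeries {R : Type*} [CommSemiring R] (g : ℕ → R) (n : ℕ) :
    coeff n (lambertSeries g) = ∑ d ∈ n.divisors, g d :=
  coeff_mk _ _

theorem coeff_lambertSeries_mul {R : Type*} [CommSemiring R] (g h : ℕ → R) (n : ℕ) :
    coeff n (lambertSeries g * lambertSeries h) = repSum n fun a b _ _ => g a * h b := by
  have hdiv (f : ℕ → R) (m : ℕ) : ∑ d ∈ m.divisors, f d = ∑ p ∈ m.divisorsAntidiagonal, f p.1 :=
    (Nat.sum_divisorsAntidiagonal fun d _ => f d).symm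
  simp only [coeff_mul, lambertSeries, coeff_mk, hdiv, sum_mul_sum, ← sum_product']
  rw [sum_sigma']
  refine sum_nbij' (fun s => (s.2.1.1, s.2.2.1, s.2.1.2, s.2.2.2))
    (fun q => ⟨(q.1 * q.2.2.1, q.2.1 * q.2.2.2), (q.1, q.2.2.1), (q.2.1, q.2.2.2)⟩)
    ?_ ?_ ?_ (fun _ _ => rfl) (fun _ _ => rfl)
  · rintro ⟨⟨i, j⟩, ⟨a, x⟩, ⟨b, y⟩⟩ h
    simp only [mem_sigma, HasAntidiagonal.mem_antidiagonal, mem_product,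
      Nat.mem_divisorsAntidiagonal] at h
    obtain ⟨rfl, ⟨rfl, hax⟩, ⟨rfl, hby⟩⟩ := h
    rw [mul_ne_zero_iff] at hax hby
    dsimp only
    exact mem_reps.2 ⟨by omega, by omega, by omega, by omega, rfl⟩
  · rintro ⟨a, b, x, y⟩ h
    simp only [mem_reps] at h
    obtain ⟨ha, hb, hx, hy, rfl⟩ := h
    simp [ha.ne', hb.ne', hx.ne', hy.ne']
  · rintro ⟨⟨i, j⟩, ⟨a, x⟩, ⟨b, y⟩⟩ h
    simp only [mem_sigma, HasAntidiagonal.mem_antidiagonal, mem_product,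
      Nat.mem_divisorsAntidiagonal] at h
    obtain ⟨rfl, ⟨rfl, -⟩, ⟨rfl, -⟩⟩ := h
    rfl

theorem coeff_ofNat_mul {R : Type*} [CommSemiring R] (k : ℕ) [k.AtLeastTwo] (f : R⟦X⟧) (n : ℕ) :
    coeff n (ofNat(k) * f) = ofNat(k) * coeff n f := by
  rw [← map_ofNat C, coeff_C_mul]

theorem coeff_X_mul_derivative {R : Type*} [CommSemiring R] (f : R⟦X⟧) (n : ℕ) :
    coeff n (X * d⁄dX R f) = n * coeff n f := by
  cases n with
  | zero => simp
  | succ n => rw [coeff_succ_X_mul, coeff_derivative, mul_comm, Nat.cast_succ]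

theorem derivative_expand_two {R : Type*} [CommRing R] (f : R⟦X⟧) :
    d⁄dX R (expand 2 two_ne_zero f) = 2 * X * expand 2 two_ne_zero (d⁄dX R f) := by
  rw [expand_apply, expand_apply, derivative_subst (HasSubst.X_pow two_ne_zero),
    Derivation.leibniz_pow, derivative_X, pow_one, smul_eq_mul, mul_one, nsmul_eq_mul,
    Nat.cast_ofNat]
  ring

def sigmaSeries (k : ℕ) : ℚ⟦X⟧ :=
  lambertSeries fun d => (d : ℚ) ^ k

def altSigmaSeries (k : ℕ) : ℚ⟦X⟧ :=
  lambertSeries fun d => (-1) ^ d * (d : ℚ) ^ k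

theorem twelve_mul_sigmaSeries_one_sq :
    12 * sigmaSeries 1 ^ 2
      = 5 * sigmaSeries 3 + sigmaSeries 1 - 6 * (X * d⁄dX ℚ (sigmaSeries 1)) := by
  ext n
  rw [sq, coeff_ofNat_mul, sigmaSeries, coeff_lambertSeries_mul]
  simp only [pow_one, twelve_mul_repSum_mul, map_add, map_sub, coeff_ofNat_mul,
    coeff_X_mul_derivative, sigmaSeries, coeff_lambertSeries, mul_sum, ← sum_add_distrib,
    ← sum_sub_distrib]
  exact sum_congr rfl fun d _ => by ring

theorem four_mul_altSigmaSeries_one_sq :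
    4 * altSigmaSeries 1 ^ 2
      = altSigmaSeries 3 + altSigmaSeries 1 - 2 * (X * d⁄dX ℚ (altSigmaSeries 1)) := by
  ext n
  rw [sq, coeff_ofNat_mul, altSigmaSeries, coeff_lambertSeries_mul]
  simp only [pow_one, four_mul_repSum_neg_one_pow_mul, map_add, map_sub, coeff_ofNat_mul,
    coeff_X_mul_derivative, altSigmaSeries, coeff_lambertSeries, mul_sum, ← sum_add_distrib,
    ← sum_sub_distrib]
  exact sum_congr rfl fun d _ => by ring

theorem altSigmaSeries_eq (k : ℕ) :
    altSigmaSeries k = C (2 ^ (k + 1)) * expand 2 two_ne_zero (sigmaSeries k) - sigmaSeries k := by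
  ext n
  simp only [map_sub, coeff_C_mul, coeff_expand, altSigmaSeries, sigmaSeries, coeff_lambertSeries,
    sum_divisors_neg_one_pow_mul]
  split_ifs
  · rw [mul_sum, mul_sum]
    congr 1
    exact sum_congr rfl fun e _ => by push_cast; ring
  · ring

theorem subSq_eq_expand (f : ℚ⟦X⟧) : subSq f = expand 2 two_ne_zero f := by
  ext n
  rw [subSq, coeff_mk, coeff_expand]

theorem G2_eq_sigmaSeries : G2 = sigmaSeries 1 - C 24⁻¹ := by
  ext n
  rw [G2, coeff_mk, map_sub, coeff_C, sigmaSeries, coeff_lambertSeries]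
  cases n with
  | zero => norm_num
  | succ n => simp

theorem stmt4 :
    32 * (subSq G2) ^ 2 - 40 * (subSq G2) * G2 + 8 * G2 ^ 2 - X * G2.derivativeFun
      = 4 * X ^ 2 * subSq G2.derivativeFun := by
  change _ - X * d⁄dX ℚ G2 = _ * subSq (d⁄dX ℚ G2)
  have hD : d⁄dX ℚ G2 = d⁄dX ℚ (sigmaSeries 1) := by
    rw [G2_eq_sigmaSeries, map_sub, derivative_C, sub_zero]
  have hI := twelve_mul_sigmaSeries_one_sq
  have hI₂ := congrArg (expand 2 two_ne_zero) hI
  simp only [map_sub, map_add, map_mul, map_pow, map_ofNat, expand_X] at hI₂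
  have hII := four_mul_altSigmaSeries_one_sq
  simp only [altSigmaSeries_eq, map_sub, Derivation.leibniz, smul_eq_mul, derivative_C, mul_zero,
    add_zero, derivative_expand_two] at hII
  simp only [map_pow, map_ofNat] at hII
  have hc : C (24⁻¹ : ℚ) * 24 = 1 := by
    rw [← map_ofNat C 24, ← map_mul]
    norm_num
  have h4 : (4 : ℚ⟦X⟧) ≠ 0 := by
    rw [← map_ofNat C 4]
    exact (map_ne_zero C).2 four_ne_zero
  rw [hD, subSq_eq_expand, subSq_eq_expand, G2_eq_sigmaSeries, map_sub, expand_C]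
  -- the combination of `hI`, `hI₂`, `hII` has coefficients in `ℤ[1/4]`
  apply mul_left_cancel₀ h4
  linear_combination (-16) * hI₂ + 5 * hII + hI
    + 4 * (sigmaSeries 1 - expand 2 two_ne_zero (sigmaSeries 1)) * hc
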